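/- For every real inner product space (V,⟪·,·⟫) and every family of vectors (V_w) indexed by words, and assuming the expectation Gram matrix is positive semidefinite at grade n, the following hold for the endomorphism R_ε := (1/(1+ε))·(id − ε·S) (the leading-order remainder of the integrator generated by f⋆(id;ε) = ½(id − ε·id^{⋆(−1)})): (i) for every ε > 0, ‖(id−E)∘R_ε‖² ≤ ‖(id−E)∘id‖² (the integrator is efficient); (ii) the mean-square excess ‖(id−E)∘id‖² − ‖(id−E)∘R_ε‖², regarded as a function of ε on (0,∞), attains its maximum at ε = 1, i.e. the sinhlog integrator is optimally efficient within this class. -/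

import Mathlib

open Finsupp

/-- Words over the alphabet `A = {0,1,…,d}`. -/
abbrev Word (d : ℕ) : Type := List (Fin (d+1))

/-- The free real vector space with basis the set of all words. -/
abbrev KA (d : ℕ) : Type := Word d →₀ ℝ

/-- Shuffle product of two words, as an element of `KA d`. -/
noncomputable def shuffleWord (d : ℕ) : Word d → Word d → KA d
  | [], v => Finsupp.single v 1
  | a :: u, [] => Finsupp.single (a :: u) 1
  | a :: u, b :: v =>
      Finsupp.mapDomain (List.cons a) (shuffleWord d u (b :: v)) +
      Finsupp.mapDomain (List.cons b) (shuffleWord d (a :: u) v)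
  termination_by u v => u.length + v.length

/-- Bilinear extension of the shuffle product to `KA d`. -/
noncomputable def sh (d : ℕ) (x y : KA d) : KA d :=
  x.sum fun u cu => y.sum fun v cv => (cu * cv) • shuffleWord d u v

/-- Admissible words: concatenations of blocks each of which is the single
letter `0` or a pair `aa` with `a ≠ 0`. -/
inductive Admissible (d : ℕ) : Word d → Prop
  | nil : Admissible d []
  | zero {w : Word d} : Admissible d w → Admissible d (0 :: w)
  | pair {w : Word d} (a : Fin (d+1)) : a ≠ 0 → Admissible d w →
      Admissible d (a :: a :: w)

/-- Number of `0` letters. -/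
def zc (d : ℕ) (w : Word d) : ℕ := w.count 0

/-- Half the number of nonzero letters. -/
def dc (d : ℕ) (w : Word d) : ℕ := (w.length - w.count 0) / 2

def nc (d : ℕ) (w : Word d) : ℕ := zc d w + dc d w

open Classical in
/-- The expectation map on words. -/
noncomputable def Ebar (d : ℕ) (t : ℝ) (w : Word d) : ℝ :=
  if Admissible d w then t ^ nc d w / (2 ^ dc d w * Nat.factorial (nc d w)) else 0

/-- Linear extension of the expectation map to `KA d`. -/
noncomputable def EbarL (d : ℕ) (t : ℝ) (x : KA d) : ℝ :=
  x.sum fun w c => c * Ebar d t w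

/-- The linear endomorphism of `KA d` determined by values on basis words. -/
noncomputable def wordLift (d : ℕ) (f : Word d → KA d) : KA d →ₗ[ℝ] KA d :=
  Finsupp.lsum ℝ fun w => LinearMap.toSpanSingleton ℝ (KA d) (f w)

/-- The identity endomorphism `id`. -/
noncomputable def idE (d : ℕ) : KA d →ₗ[ℝ] KA d := LinearMap.id

/-- The reversal endomorphism `|S|`. -/
noncomputable def revE (d : ℕ) : KA d →ₗ[ℝ] KA d :=
  wordLift d fun w => Finsupp.single w.reverse 1

/-- The antipode `S`. -/
noncomputable def Sa (d : ℕ) : KA d →ₗ[ℝ] KA d :=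
  wordLift d fun w => Finsupp.single w.reverse ((-1 : ℝ) ^ w.length)

/-- The convolution unit `ν`. -/
noncomputable def nuE (d : ℕ) : KA d →ₗ[ℝ] KA d :=
  wordLift d fun w => if w = [] then Finsupp.single ([] : Word d) 1 else 0

/-- The expectation endomorphism `E`. -/
noncomputable def EE (d : ℕ) (t : ℝ) : KA d →ₗ[ℝ] KA d :=
  wordLift d fun w => Finsupp.single ([] : Word d) (Ebar d t w)

/-- The convolution product `X ⋆ Y`. -/
noncomputable def conv (d : ℕ) (X Y : KA d →ₗ[ℝ] KA d) : KA d →ₗ[ℝ] KA d :=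
  wordLift d fun w => ∑ k ∈ Finset.range (w.length + 1),
    sh d (X (Finsupp.single (w.take k) 1)) (Y (Finsupp.single (w.drop k) 1))

/-- Convolution powers, `X^{⋆0} = ν`. -/
noncomputable def convPow (d : ℕ) (X : KA d →ₗ[ℝ] KA d) : ℕ → (KA d →ₗ[ℝ] KA d)
  | 0 => nuE d
  | k + 1 => conv d X (convPow d X k)

/-- The inner product `⟨X,Y⟩` of endomorphisms, taken over the words of
length `n`, relative to the family of vectors `Vf`. -/
noncomputable def ip (d : ℕ) (t : ℝ) {H : Type*} [NormedAddCommGroup H]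
    [InnerProductSpace ℝ H] (Vf : Word d → H) (n : ℕ)
    (X Y : KA d →ₗ[ℝ] KA d) : ℝ :=
  ∑ u : Fin n → Fin (d+1), ∑ v : Fin n → Fin (d+1),
    EbarL d t (sh d (X (Finsupp.single (List.ofFn u) 1))
                    (Y (Finsupp.single (List.ofFn v) 1))) *
      (inner ℝ (Vf (List.ofFn u)) (Vf (List.ofFn v)) : ℝ)

/-- Positive semidefiniteness of the expectation Gram matrix at grade `n`:
indexed by the words of length `n` together with the empty word. -/
def gramPSD (d n : ℕ) (t : ℝ) : Prop :=
  ∀ c : Option (Fin n → Fin (d+1)) → ℝ,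
    0 ≤ ∑ x : Option (Fin n → Fin (d+1)), ∑ y : Option (Fin n → Fin (d+1)),
      c x * c y *
        EbarL d t (shuffleWord d (x.elim ([] : Word d) List.ofFn)
                                 (y.elim ([] : Word d) List.ofFn))

/-- `R_ε = (1/(1+ε))·(id − ε·S)`, the leading-order remainder endomorphism of
the integrator generated by `f⋆(id;ε) = ½(id − ε·id^{⋆(−1)})`. -/
noncomputable def Reps (d : ℕ) (ε : ℝ) : KA d →ₗ[ℝ] KA d :=
  (1 / (1 + ε)) • (idE d - ε • Sa d)

/-!
With `T = id - E` we have `T ∘ R_ε = (T - ε • T ∘ S) / (1 + ε)`. Reversal of words commutes with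
the shuffle product and preserves `Ē`, and `S` reverses a word of length `n` up to the sign
`(-1)ⁿ`, so `‖T ∘ S‖² = ‖T‖²`. Expanding the square then gives
`‖T ∘ R_ε‖² = ‖T‖² - ε / (1 + ε)² · ‖T + T ∘ S‖²`. The last norm is a Schur product of the
expectation Gram matrix with the Gram matrix of the vectors `V_w`, hence nonnegative, and
`ε / (1 + ε)²` is largest at `ε = 1`.
-/

open scoped RealInnerProductSpace

theorem LinearMap.BilinForm.apply_remainder_self {M : Type*} [AddCommGroup M] [Module ℝ M]
    (B : LinearMap.BilinForm ℝ M) {X Y : M} (hY : B Y Y = B X X) {ε : ℝ} (hε : 1 + ε ≠ 0) :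
    B ((1 / (1 + ε)) • (X - ε • Y)) ((1 / (1 + ε)) • (X - ε • Y)) =
      B X X - ε / (1 + ε) ^ 2 * B (X + Y) (X + Y) := by
  simp only [map_smul, map_sub, map_add, LinearMap.smul_apply, LinearMap.sub_apply,
    LinearMap.add_apply, smul_eq_mul, hY]
  field_simp
  ring

theorem div_one_add_sq_le_quarter {ε : ℝ} (hε : 0 < ε) : ε / (1 + ε) ^ 2 ≤ 1 / (1 + 1) ^ 2 := by
  rw [div_le_div_iff₀ (by positivity) (by norm_num)]
  nlinarith [sq_nonneg (1 - ε)]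

section InnerProduct

variable {ι κ H : Type*} [Fintype ι] [Fintype κ] [NormedAddCommGroup H] [InnerProductSpace ℝ H]

/-- A Schur-product argument: expand the Gram matrix of `W` in an orthonormal basis of its span. -/
theorem sum_sum_mul_inner_nonneg {C : ι → ι → ℝ}
    (hC : ∀ c : ι → ℝ, 0 ≤ ∑ x, ∑ y, c x * c y * C x y) (W : ι → H) :
    0 ≤ ∑ x, ∑ y, C x y * ⟪W x, W y⟫ := by
  let F := Submodule.span ℝ (Set.range W)
  have : FiniteDimensional ℝ F := FiniteDimensional.span_of_finite ℝ (Set.finite_range W)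
  let b := stdOrthonormalBasis ℝ F
  let W' : ι → F := fun x => ⟨W x, Submodule.subset_span (Set.mem_range_self x)⟩
  have hW : ∀ x y, ⟪W x, W y⟫ = ∑ k, ⟪W' x, b k⟫ * ⟪W' y, b k⟫ := fun x y => by
    change ⟪W' x, W' y⟫ = _
    rw [← b.sum_inner_mul_inner]
    simp_rw [real_inner_comm (W' y)]
  calc 0 ≤ ∑ k, ∑ x, ∑ y, ⟪W' x, b k⟫ * ⟪W' y, b k⟫ * C x y :=
        Finset.sum_nonneg fun k _ => hC _
    _ = _ := by
      simp_rw [hW, Finset.mul_sum]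
      rw [Finset.sum_comm]
      refine Finset.sum_congr rfl fun x _ => ?_
      rw [Finset.sum_comm]
      exact Finset.sum_congr rfl fun y _ => Finset.sum_congr rfl fun k _ => by ring

theorem sum_sum_mul_inner_eq_sum_sum_mul_inner_sum_smul (N : κ → ι → ℝ) (C : κ → κ → ℝ)
    (V : ι → H) :
    ∑ u, ∑ v, (∑ x, ∑ y, N x u * N y v * C x y) * ⟪V u, V v⟫ =
      ∑ x, ∑ y, C x y * ⟪∑ u, N x u • V u, ∑ v, N y v • V v⟫ := by
  simp only [sum_inner, inner_sum, real_inner_smul_left, real_inner_smul_right, Finset.mul_sum,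
    Finset.sum_mul]
  calc _ = ∑ u, ∑ x, ∑ v, ∑ y, N x u * N y v * C x y * ⟪V u, V v⟫ :=
        Finset.sum_congr rfl fun _ _ => Finset.sum_comm
    _ = ∑ x, ∑ u, ∑ v, ∑ y, N x u * N y v * C x y * ⟪V u, V v⟫ := Finset.sum_comm
    _ = ∑ x, ∑ y, ∑ u, ∑ v, N x u * N y v * C x y * ⟪V u, V v⟫ :=
        Finset.sum_congr rfl fun _ _ =>
          (Finset.sum_congr rfl fun _ _ => Finset.sum_comm).trans Finset.sum_comm
    _ = _ := Finset.sum_congr rfl fun _ _ => Finset.sum_congr rfl fun _ _ =>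
        Finset.sum_comm.trans (Finset.sum_congr rfl fun _ _ => Finset.sum_congr rfl fun _ _ => by
          ring)

end InnerProduct

theorem List.reverse_ofFn {α : Type*} {n : ℕ} (f : Fin n → α) :
    (List.ofFn f).reverse = List.ofFn (f ∘ Fin.rev) := by
  apply List.ext_getElem
  · simp
  · intro i h1 h2
    simp only [List.getElem_reverse, List.getElem_ofFn, Function.comp_apply]
    congr 1
    ext
    simp only [Fin.rev, List.length_reverse, List.length_ofFn] at h1 h2 ⊢
    omega

section Shuffle

variable {d : ℕ}

theorem shuffleWord_nil_left (v : Word d) : shuffleWord d [] v = single v 1 := by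
  cases v <;> simp [shuffleWord]

theorem shuffleWord_nil_right (u : Word d) : shuffleWord d u [] = single u 1 := by
  cases u <;> simp [shuffleWord]

theorem shuffleWord_cons_cons (a b : Fin (d + 1)) (u v : Word d) :
    shuffleWord d (a :: u) (b :: v) =
      mapDomain (List.cons a) (shuffleWord d u (b :: v)) +
        mapDomain (List.cons b) (shuffleWord d (a :: u) v) := by
  rw [shuffleWord]

theorem mapDomain_cons_mapDomain_append_singleton (c a : Fin (d + 1)) (x : KA d) :
    mapDomain (List.cons c) (mapDomain (· ++ [a]) x) =
      mapDomain (· ++ [a]) (mapDomain (List.cons c) x) := by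
  rw [← mapDomain_comp, ← mapDomain_comp]
  rfl

theorem mapDomain_reverse_mapDomain_cons (c : Fin (d + 1)) (x : KA d) :
    mapDomain List.reverse (mapDomain (List.cons c) x) =
      mapDomain (· ++ [c]) (mapDomain List.reverse x) := by
  rw [← mapDomain_comp, ← mapDomain_comp]
  congr 1
  funext w
  simp

theorem shuffleWord_append_singleton (a b : Fin (d + 1)) :
    ∀ u v : Word d,
      shuffleWord d (u ++ [a]) (v ++ [b]) =
        mapDomain (· ++ [a]) (shuffleWord d u (v ++ [b])) +
          mapDomain (· ++ [b]) (shuffleWord d (u ++ [a]) v)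
  | [], [] => by
      simp only [List.nil_append, shuffleWord_cons_cons, shuffleWord_nil_left,
        shuffleWord_nil_right, mapDomain_single, List.singleton_append]
      abel
  | [], c :: v => by
      have ih := shuffleWord_append_singleton a b [] v
      simp only [List.nil_append, List.cons_append] at ih ⊢
      rw [shuffleWord_cons_cons, ih]
      simp only [shuffleWord_cons_cons, shuffleWord_nil_left, mapDomain_add, mapDomain_single,
        mapDomain_cons_mapDomain_append_singleton, List.cons_append]
      abel
  | c :: u, [] => by
      have ih := shuffleWord_append_singleton a b u []
      simp only [List.nil_append, List.cons_append] at ih ⊢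
      rw [shuffleWord_cons_cons, ih]
      simp only [shuffleWord_cons_cons, shuffleWord_nil_right, mapDomain_add, mapDomain_single,
        mapDomain_cons_mapDomain_append_singleton, List.cons_append]
      abel
  | c :: u, e :: v => by
      have ih₁ := shuffleWord_append_singleton a b u (e :: v)
      have ih₂ := shuffleWord_append_singleton a b (c :: u) v
      simp only [List.cons_append] at ih₁ ih₂ ⊢
      rw [shuffleWord_cons_cons, ih₁, ih₂]
      conv_rhs => rw [shuffleWord_cons_cons, shuffleWord_cons_cons]
      simp only [mapDomain_add, mapDomain_cons_mapDomain_append_singleton]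
      abel
  termination_by u v => u.length + v.length
  decreasing_by all_goals simp +arith [List.length]

theorem shuffleWord_reverse :
    ∀ u v : Word d,
      shuffleWord d u.reverse v.reverse = mapDomain List.reverse (shuffleWord d u v)
  | [], v => by simp [shuffleWord_nil_left, mapDomain_single]
  | c :: u, [] => by simp [shuffleWord_nil_right, mapDomain_single]
  | c :: u, e :: v => by
      rw [shuffleWord_cons_cons, mapDomain_add, List.reverse_cons, List.reverse_cons,
        shuffleWord_append_singleton, ← List.reverse_cons, ← List.reverse_cons,
        shuffleWord_reverse u (e :: v), shuffleWord_reverse (c :: u) v,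
        mapDomain_reverse_mapDomain_cons, mapDomain_reverse_mapDomain_cons]
  termination_by u v => u.length + v.length

variable (d)

theorem sh_single_single (u v : Word d) : sh d (single u 1) (single v 1) = shuffleWord d u v := by
  rw [sh, sum_single_index, sum_single_index] <;> simp

theorem sh_add_left (x x' y : KA d) : sh d (x + x') y = sh d x y + sh d x' y := by
  unfold sh
  rw [sum_add_index' (fun _ => by simp) fun _ _ _ => ?_]
  rw [← sum_add]
  simp only [add_mul, add_smul]

theorem sh_smul_left (r : ℝ) (x y : KA d) : sh d (r • x) y = r • sh d x y := by
  unfold sh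
  rw [sum_smul_index (fun _ => by simp), smul_sum]
  simp only [smul_sum, mul_assoc, mul_smul]

theorem sh_add_right (x y y' : KA d) : sh d x (y + y') = sh d x y + sh d x y' := by
  unfold sh
  rw [← sum_add]
  congr 1; funext u cu
  rw [sum_add_index' (fun _ => by simp) fun _ _ _ => by rw [mul_add, add_smul]]

theorem sh_smul_right (r : ℝ) (x y : KA d) : sh d x (r • y) = r • sh d x y := by
  unfold sh
  rw [smul_sum]
  congr 1; funext u cu
  rw [sum_smul_index (fun _ => by simp), smul_sum]
  simp only [mul_left_comm, mul_smul]

noncomputable def shuffleBilin : KA d →ₗ[ℝ] KA d →ₗ[ℝ] KA d :=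
  LinearMap.mk₂ ℝ (sh d) (sh_add_left d) (sh_smul_left d) (sh_add_right d) (sh_smul_right d)

end Shuffle

section Expectation

variable {d : ℕ}

theorem Admissible.append {u v : Word d} (hu : Admissible d u) (hv : Admissible d v) :
    Admissible d (u ++ v) := by
  induction hu with
  | nil => simpa
  | zero _ ih => exact ih.zero
  | pair a ha _ ih => exact ih.pair a ha

theorem Admissible.reverse {u : Word d} (hu : Admissible d u) : Admissible d u.reverse := by
  induction hu with
  | nil => exact .nil
  | zero _ ih => simpa using ih.append Admissible.nil.zero
  | pair a ha _ ih => simpa using ih.append (Admissible.nil.pair a ha)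

theorem admissible_reverse_iff {w : Word d} : Admissible d w.reverse ↔ Admissible d w :=
  ⟨fun h => by simpa using h.reverse, Admissible.reverse⟩

variable (d) (t : ℝ)

theorem Ebar_reverse (w : Word d) : Ebar d t w.reverse = Ebar d t w := by
  unfold Ebar
  rw [admissible_reverse_iff]
  simp only [nc, zc, dc, List.count_reverse, List.length_reverse]

theorem Ebar_nil : Ebar d t [] = 1 := by
  simp [Ebar, Admissible.nil, nc, zc, dc]

theorem EbarL_eq_linearCombination (x : KA d) :
    EbarL d t x = linearCombination ℝ (Ebar d t) x := by
  simp [EbarL, linearCombination_apply]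

theorem EbarL_single (w : Word d) (c : ℝ) : EbarL d t (single w c) = c * Ebar d t w := by
  simp [EbarL_eq_linearCombination]

theorem EbarL_mapDomain_reverse (x : KA d) :
    EbarL d t (mapDomain List.reverse x) = EbarL d t x := by
  rw [EbarL_eq_linearCombination, EbarL_eq_linearCombination, linearCombination_mapDomain]
  simp only [Function.comp_def, Ebar_reverse]

noncomputable def expShuffle : LinearMap.BilinForm ℝ (KA d) :=
  (shuffleBilin d).compr₂ (linearCombination ℝ (Ebar d t))

theorem expShuffle_apply (x y : KA d) : expShuffle d t x y = EbarL d t (sh d x y) := by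
  simp [expShuffle, shuffleBilin, EbarL_eq_linearCombination]

theorem expShuffle_single_single (u v : Word d) :
    expShuffle d t (single u 1) (single v 1) = EbarL d t (shuffleWord d u v) := by
  rw [expShuffle_apply, sh_single_single]

noncomputable def centered (w : Word d) : KA d :=
  single w 1 - Ebar d t w • single [] 1

theorem expShuffle_centered (u v : Word d) :
    expShuffle d t (centered d t u) (centered d t v) =
      EbarL d t (shuffleWord d u v) - Ebar d t u * Ebar d t v := by
  simp only [centered, map_sub, map_smul, LinearMap.sub_apply, LinearMap.smul_apply,
    expShuffle_single_single, shuffleWord_nil_left, shuffleWord_nil_right, EbarL_single,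
    Ebar_nil, smul_eq_mul]
  ring

theorem expShuffle_centered_reverse (u v : Word d) :
    expShuffle d t (centered d t u.reverse) (centered d t v.reverse) =
      expShuffle d t (centered d t u) (centered d t v) := by
  rw [expShuffle_centered, expShuffle_centered, shuffleWord_reverse, EbarL_mapDomain_reverse,
    Ebar_reverse, Ebar_reverse]

end Expectation

section Endomorphisms

variable (d : ℕ) (t : ℝ)

theorem wordLift_single (f : Word d → KA d) (w : Word d) : wordLift d f (single w 1) = f w := by
  rw [wordLift, lsum_single, LinearMap.toSpanSingleton_apply, one_smul]

theorem comp_idE (T : KA d →ₗ[ℝ] KA d) : T ∘ₗ idE d = T := rfl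

theorem sub_EE_single (w : Word d) : (idE d - EE d t) (single w 1) = centered d t w := by
  rw [LinearMap.sub_apply, EE, wordLift_single, centered, smul_single, smul_eq_mul, mul_one]
  rfl

theorem Sa_single (w : Word d) : Sa d (single w 1) = (-1 : ℝ) ^ w.length • single w.reverse 1 := by
  rw [Sa, wordLift_single, smul_single, smul_eq_mul, mul_one]

theorem comp_Reps (T : KA d →ₗ[ℝ] KA d) (ε : ℝ) :
    T ∘ₗ Reps d ε = (1 / (1 + ε)) • (T ∘ₗ idE d - ε • (T ∘ₗ Sa d)) := by
  rw [Reps, LinearMap.comp_smul, LinearMap.comp_sub, LinearMap.comp_smul]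

/-- Coordinates of `(id - E)(w) + (id - E)(S w)`, `w = ofFn u`, in the family of words indexing
`gramPSD`, where `none` stands for `𝟏`. -/
noncomputable def symCoeff (n : ℕ) (x : Option (Fin n → Fin (d + 1))) (u : Fin n → Fin (d + 1)) :
    ℝ :=
  x.elim (-(Ebar d t (List.ofFn u) + (-1) ^ n * Ebar d t (List.ofFn u).reverse))
    fun y => (if y = u then 1 else 0) + (-1) ^ n * if y = u ∘ Fin.rev then 1 else 0

theorem sub_EE_add_comp_Sa_single_ofFn (n : ℕ) (u : Fin n → Fin (d + 1)) :
    ((idE d - EE d t) ∘ₗ idE d + (idE d - EE d t) ∘ₗ Sa d) (single (List.ofFn u) 1) =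
      ∑ x : Option (Fin n → Fin (d + 1)),
        symCoeff d t n x u • single (x.elim [] List.ofFn) 1 := by
  classical
  rw [comp_idE, LinearMap.add_apply, LinearMap.comp_apply, Sa_single, map_smul,
    sub_EE_single, sub_EE_single, List.length_ofFn, Fintype.sum_option]
  simp only [symCoeff, Option.elim, add_smul, mul_ite, mul_one, mul_zero, ite_smul, zero_smul,
    one_smul, Finset.sum_add_distrib, Finset.sum_ite_eq', Finset.mem_univ, if_true,
    ← List.reverse_ofFn, centered, smul_sub, smul_smul, neg_smul]
  abel

end Endomorphisms

section InnerProductOfEndomorphisms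

variable (d n : ℕ) (t : ℝ) {H : Type*} [NormedAddCommGroup H] [InnerProductSpace ℝ H]
  (Vf : Word d → H)

theorem ip_eq_sum_expShuffle (X Y : KA d →ₗ[ℝ] KA d) :
    ip d t Vf n X Y = ∑ u : Fin n → Fin (d + 1), ∑ v : Fin n → Fin (d + 1),
      expShuffle d t (X (single (List.ofFn u) 1)) (Y (single (List.ofFn v) 1)) *
        ⟪Vf (List.ofFn u), Vf (List.ofFn v)⟫ := by
  simp only [ip, expShuffle_apply]

noncomputable def ipForm : LinearMap.BilinForm ℝ (KA d →ₗ[ℝ] KA d) :=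
  ∑ u : Fin n → Fin (d + 1), ∑ v : Fin n → Fin (d + 1), ⟪Vf (List.ofFn u), Vf (List.ofFn v)⟫ •
    (expShuffle d t).compl₁₂ (LinearMap.applyₗ (single (List.ofFn u) 1))
      (LinearMap.applyₗ (single (List.ofFn v) 1))

theorem ipForm_apply (X Y : KA d →ₗ[ℝ] KA d) : ipForm d n t Vf X Y = ip d t Vf n X Y := by
  simp [ipForm, ip_eq_sum_expShuffle, mul_comm]

theorem ip_comp_Sa_self :
    ip d t Vf n ((idE d - EE d t) ∘ₗ Sa d) ((idE d - EE d t) ∘ₗ Sa d) =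
      ip d t Vf n ((idE d - EE d t) ∘ₗ idE d) ((idE d - EE d t) ∘ₗ idE d) := by
  simp only [ip_eq_sum_expShuffle, comp_idE, LinearMap.comp_apply, Sa_single, map_smul,
    sub_EE_single, LinearMap.smul_apply, expShuffle_centered_reverse, smul_eq_mul,
    List.length_ofFn, ← mul_assoc, ← mul_pow, neg_one_mul, neg_neg, one_pow, one_mul]

theorem ip_nonneg_of_gramPSD (hPSD : gramPSD d n t) :
    0 ≤ ip d t Vf n ((idE d - EE d t) ∘ₗ idE d + (idE d - EE d t) ∘ₗ Sa d)
      ((idE d - EE d t) ∘ₗ idE d + (idE d - EE d t) ∘ₗ Sa d) := by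
  have hexp : ∀ u v : Fin n → Fin (d + 1),
      expShuffle d t
          (((idE d - EE d t) ∘ₗ idE d + (idE d - EE d t) ∘ₗ Sa d) (single (List.ofFn u) 1))
          (((idE d - EE d t) ∘ₗ idE d + (idE d - EE d t) ∘ₗ Sa d) (single (List.ofFn v) 1)) =
        ∑ x, ∑ y, symCoeff d t n x u * symCoeff d t n y v *
          EbarL d t (shuffleWord d (x.elim [] List.ofFn) (y.elim [] List.ofFn)) := fun u v => by
    simp only [sub_EE_add_comp_Sa_single_ofFn, map_sum, map_smul, LinearMap.sum_apply,
      LinearMap.smul_apply, expShuffle_single_single, smul_eq_mul, Finset.mul_sum]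
    rw [Finset.sum_comm]
    exact Finset.sum_congr rfl fun x _ => Finset.sum_congr rfl fun y _ => by ring
  simp only [ip_eq_sum_expShuffle, hexp]
  rw [sum_sum_mul_inner_eq_sum_sum_mul_inner_sum_smul]
  exact sum_sum_mul_inner_nonneg hPSD _

theorem ip_comp_Reps_self {ε : ℝ} (hε : 1 + ε ≠ 0) :
    ip d t Vf n ((idE d - EE d t) ∘ₗ Reps d ε) ((idE d - EE d t) ∘ₗ Reps d ε) =
      ip d t Vf n ((idE d - EE d t) ∘ₗ idE d) ((idE d - EE d t) ∘ₗ idE d) -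
        ε / (1 + ε) ^ 2 *
          ip d t Vf n ((idE d - EE d t) ∘ₗ idE d + (idE d - EE d t) ∘ₗ Sa d)
            ((idE d - EE d t) ∘ₗ idE d + (idE d - EE d t) ∘ₗ Sa d) := by
  have hS := ip_comp_Sa_self d n t Vf
  simp only [← ipForm_apply] at hS ⊢
  rw [comp_Reps]
  exact (ipForm d n t Vf).apply_remainder_self (M := KA d →ₗ[ℝ] KA d) hS hε

end InnerProductOfEndomorphisms

theorem stmt_0_general (d n : ℕ) (t : ℝ)
    {H : Type*} [NormedAddCommGroup H] [InnerProductSpace ℝ H]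
    (Vf : Word d → H) (hPSD : gramPSD d n t) :
    (∀ ε : ℝ, 0 < ε →
      ip d t Vf n ((idE d - EE d t) ∘ₗ Reps d ε) ((idE d - EE d t) ∘ₗ Reps d ε)
        ≤ ip d t Vf n ((idE d - EE d t) ∘ₗ idE d) ((idE d - EE d t) ∘ₗ idE d)) ∧
    (∀ ε : ℝ, 0 < ε →
      ip d t Vf n ((idE d - EE d t) ∘ₗ idE d) ((idE d - EE d t) ∘ₗ idE d)
          - ip d t Vf n ((idE d - EE d t) ∘ₗ Reps d ε) ((idE d - EE d t) ∘ₗ Reps d ε)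
        ≤ ip d t Vf n ((idE d - EE d t) ∘ₗ idE d) ((idE d - EE d t) ∘ₗ idE d)
          - ip d t Vf n ((idE d - EE d t) ∘ₗ Reps d 1) ((idE d - EE d t) ∘ₗ Reps d 1)) := by
  have hQ := ip_nonneg_of_gramPSD d n t Vf hPSD
  refine ⟨fun ε hε => ?_, fun ε hε => ?_⟩
  · rw [ip_comp_Reps_self d n t Vf (ε := ε) (by positivity)]
    exact sub_le_self _ (mul_nonneg (by positivity) hQ)
  · rw [ip_comp_Reps_self d n t Vf (ε := ε) (by positivity),
      ip_comp_Reps_self d n t Vf (ε := 1) (by norm_num), sub_sub_cancel, sub_sub_cancel]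
    exact mul_le_mul_of_nonneg_right (div_one_add_sq_le_quarter hε) hQ

theorem stmt_0 (d n : ℕ) (hd : 1 ≤ d) (hn : 1 ≤ n) (t : ℝ) (ht : 0 < t)
    {H : Type*} [NormedAddCommGroup H] [InnerProductSpace ℝ H]
    (Vf : Word d → H) (hPSD : gramPSD d n t) :
    (∀ ε : ℝ, 0 < ε →
      ip d t Vf n ((idE d - EE d t) ∘ₗ Reps d ε) ((idE d - EE d t) ∘ₗ Reps d ε)
        ≤ ip d t Vf n ((idE d - EE d t) ∘ₗ idE d) ((idE d - EE d t) ∘ₗ idE d)) ∧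
    (∀ ε : ℝ, 0 < ε →
      ip d t Vf n ((idE d - EE d t) ∘ₗ idE d) ((idE d - EE d t) ∘ₗ idE d)
          - ip d t Vf n ((idE d - EE d t) ∘ₗ Reps d ε) ((idE d - EE d t) ∘ₗ Reps d ε)
        ≤ ip d t Vf n ((idE d - EE d t) ∘ₗ idE d) ((idE d - EE d t) ∘ₗ idE d)
          - ip d t Vf n ((idE d - EE d t) ∘ₗ Reps d 1) ((idE d - EE d t) ∘ₗ Reps d 1)) :=
  stmt_0_general d n t Vf hPSD
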